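/- arXiv:2604.02960 — 2 statements merged into one kernel-verified Lean document; each statement's English description precedes it below -/
import Mathlib

section
/- Let Δ = (log X)^{-2}. Then J₁ = ∫_{1}^{2-Δ} dt / (t(log(2-t) + log X)) = (log 2)/(log X) + O(log log X / (log X)^2) as X → ∞. -/
open Real intervalIntegral Set Filter

/-! For `t ∈ [1, 2 - Δ]` with `L = log X`, the denominator `log (2 - t) + L` lies between
`L + log Δ = L - 2 log L` and `L`, and `∫_1^b dt / (t c) = log b / c`. So `J₁` is squeezed between
`log (2 - Δ) / L` and `log (2 - Δ) / (L - 2 log L)`, both within `O(log L / L²)` of `log 2 / L`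
because `log (2 - Δ) = log 2 + O(Δ)`. -/

theorem integral_one_div_mul_const {b : ℝ} (hb : 0 < b) (c : ℝ) :
    ∫ t in (1 : ℝ)..b, 1 / (t * c) = log b / c := by
  simp_rw [← div_div]
  rw [intervalIntegral.integral_div, integral_one_div_of_pos one_pos hb, div_one]

theorem intervalIntegrable_one_div_mul {g : ℝ → ℝ} {b : ℝ} (hb : 1 ≤ b)
    (hg : ContinuousOn g (Icc 1 b)) (hg0 : ∀ t ∈ Icc 1 b, 0 < g t) :
    IntervalIntegrable (fun t => 1 / (t * g t)) MeasureTheory.volume 1 b := by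
  refine ContinuousOn.intervalIntegrable ?_
  rw [uIcc_of_le hb]
  exact continuousOn_const.div (continuousOn_id.mul hg) fun t ht =>
    (mul_pos (one_pos.trans_le ht.1) (hg0 t ht)).ne'

theorem integral_one_div_mul_mem_Icc {g : ℝ → ℝ} {b m M : ℝ} (hb : 1 ≤ b) (hm : 0 < m)
    (hg : ContinuousOn g (Icc 1 b)) (hgb : ∀ t ∈ Icc 1 b, g t ∈ Icc m M) :
    ∫ t in (1 : ℝ)..b, 1 / (t * g t) ∈ Icc (log b / M) (log b / m) := by
  have hg0 : ∀ t ∈ Icc 1 b, 0 < g t := fun t ht => hm.trans_le (hgb t ht).1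
  have hM : 0 < M := (hg0 1 ⟨le_rfl, hb⟩).trans_le (hgb 1 ⟨le_rfl, hb⟩).2
  have hb0 : 0 < b := one_pos.trans_le hb
  rw [← integral_one_div_mul_const hb0 M, ← integral_one_div_mul_const hb0 m]
  constructor
  · refine integral_mono_on hb (intervalIntegrable_one_div_mul hb continuousOn_const
      fun _ _ => hM) (intervalIntegrable_one_div_mul hb hg hg0) fun t ht => ?_
    have ht0 : 0 < t := one_pos.trans_le ht.1
    exact one_div_le_one_div_of_le (mul_pos ht0 (hg0 t ht))
      (mul_le_mul_of_nonneg_left (hgb t ht).2 ht0.le)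
  · refine integral_mono_on hb (intervalIntegrable_one_div_mul hb hg hg0)
      (intervalIntegrable_one_div_mul hb continuousOn_const fun _ _ => hm) fun t ht => ?_
    have ht0 : 0 < t := one_pos.trans_le ht.1
    exact one_div_le_one_div_of_le (mul_pos ht0 hm)
      (mul_le_mul_of_nonneg_left (hgb t ht).1 ht0.le)

theorem log_two_sub_mem_Icc {δ t : ℝ} (hδ : 0 < δ) (ht : t ∈ Icc 1 (2 - δ)) :
    log (2 - t) ∈ Icc (log δ) 0 :=
  ⟨log_le_log hδ (by linarith [ht.2]), log_nonpos (by linarith [ht.2]) (by linarith [ht.1])⟩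

theorem log_two_sub_le_log_two_sub {δ : ℝ} (hδ0 : 0 ≤ δ) (hδ1 : δ ≤ 1) :
    log 2 - δ ≤ log (2 - δ) := by
  have h := one_sub_inv_le_log_of_pos (show 0 < (2 - δ) / 2 by linarith)
  rw [log_div (by linarith) two_ne_zero, inv_div] at h
  have : 2 / (2 - δ) ≤ 1 + δ := by
    rw [div_le_iff₀ (by linarith)]; nlinarith
  linarith

theorem abs_integral_sub_log_two_div_le {L : ℝ} (hL1 : 1 ≤ log L) (hL4 : 4 * log L ≤ L) :
    |(∫ t in (1 : ℝ)..(2 - L ^ (-2 : ℤ)), 1 / (t * (log (2 - t) + L))) - log 2 / L|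
      ≤ 4 * log L / L ^ 2 := by
  set Δ := L ^ (-2 : ℤ) with hΔ_def
  have hL : 0 < L := by linarith
  have hΔ : Δ = 1 / L ^ 2 := by rw [hΔ_def, zpow_neg, zpow_two, one_div, sq]
  have hΔ0 : 0 < Δ := by rw [hΔ]; positivity
  have hΔ1 : Δ ≤ 1 := by rw [hΔ, div_le_one (by positivity)]; nlinarith
  have hlogΔ : log Δ = -2 * log L := by rw [hΔ_def, log_zpow]; push_cast; ring
  have hm : 0 < L - 2 * log L := by linarith
  have hcont : ContinuousOn (fun t => log (2 - t) + L) (Icc 1 (2 - Δ)) :=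
    (ContinuousOn.log (by fun_prop) fun t ht => by linarith [ht.2]).add continuousOn_const
  obtain ⟨hlow, hup⟩ := integral_one_div_mul_mem_Icc (M := L) (by linarith) hm hcont fun t ht => by
    obtain ⟨h₁, h₂⟩ := log_two_sub_mem_Icc hΔ0 ht
    exact ⟨by linarith, by linarith⟩
  have hlog2 : log (2 - Δ) ∈ Icc (log 2 - Δ) (log 2) :=
    ⟨log_two_sub_le_log_two_sub hΔ0.le hΔ1, log_le_log (by linarith) (by linarith)⟩
  have hlog2_le_one : log 2 ≤ 1 := by linarith [log_le_sub_one_of_pos two_pos]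
  rw [abs_le]
  constructor
  · have hgap : Δ / L ≤ 4 * log L / L ^ 2 := by
      rw [hΔ, div_div, div_le_div_iff₀ (by positivity) (by positivity)]
      nlinarith [mul_pos (mul_pos hL hL) hL]
    have : (log 2 - Δ) / L ≤ log (2 - Δ) / L := div_le_div_of_nonneg_right hlog2.1 hL.le
    rw [sub_div] at this
    linarith
  · have hgap : log 2 / (L - 2 * log L) - log 2 / L ≤ 4 * log L / L ^ 2 := by
      calc log 2 / (L - 2 * log L) - log 2 / L = log 2 * (2 * log L) / ((L - 2 * log L) * L) := by
            field_simp; ring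
        _ ≤ 1 * (2 * log L) / (L / 2 * L) := by gcongr; linarith
        _ = 4 * log L / L ^ 2 := by field_simp; ring
    have : log (2 - Δ) / (L - 2 * log L) ≤ log 2 / (L - 2 * log L) :=
      div_le_div_of_nonneg_right hlog2.2 hm.le
    linarith

theorem eventually_one_le_log_and_four_mul_log_le :
    ∀ᶠ L in atTop, 1 ≤ log L ∧ 4 * log L ≤ L := by
  filter_upwards [tendsto_log_atTop.eventually_ge_atTop 1,
    isLittleO_log_id_atTop.bound (show (0 : ℝ) < 1 / 4 by norm_num), eventually_ge_atTop 0]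
    with L h1 h4 h0
  rw [norm_of_nonneg (by linarith), id, norm_of_nonneg h0] at h4
  exact ⟨h1, by linarith⟩

/-- With `Δ = (log X)⁻²`, `J₁ = ∫_{1}^{2-Δ} dt / (t(log(2-t)+log X))
= (log 2)/(log X) + O(log log X / (log X)^2)` as `X → ∞`. -/
theorem J1_asymptotic :
    ∃ C : ℝ, 0 < C ∧ ∃ X₀ : ℝ, ∀ X : ℝ, X₀ ≤ X →
      |(∫ t in (1 : ℝ)..(2 - (Real.log X) ^ (-2 : ℤ)),
          1 / (t * (Real.log (2 - t) + Real.log X)))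
        - Real.log 2 / Real.log X|
      ≤ C * Real.log (Real.log X) / (Real.log X) ^ 2 := by
  obtain ⟨X₀, hX₀⟩ :=
    eventually_atTop.1 (tendsto_log_atTop.eventually eventually_one_le_log_and_four_mul_log_le)
  exact ⟨4, four_pos, X₀, fun X hX => abs_integral_sub_log_two_div_le (hX₀ X hX).1 (hX₀ X hX).2⟩
end

section
/- Let q be prime and let A ⊆ X_q be a set of Dirichlet characters mod q of cardinality A with #(A·A) ≤ K·A for some K ≥ 1. Then there exists a set U ⊆ X_q with #U ≤ 2K - 1 such that every χ ∈ A has at least A/2 representations χ = χ₁ · χ₂⁻¹ · η with χ₁, χ₂ ∈ A and η ∈ U. -/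
open Finset
open scoped Classical Pointwise

/-!
Among the subsets `U ⊆ A` with `(#U + 1) #A ≤ 2 #(U A)` (a nonempty family: it contains every
singleton) pick one of maximal size. Then `#U ≤ 2K - 1` because `U A ⊆ A A`. For `χ ∈ A ∖ U`,
maximality says that adjoining `χ` to `U` adds fewer than `#A / 2` new elements to `U A`, so
`χ A` meets `U A` in more than `#A / 2` points; each point `χ b = u a` of the intersection
gives a representation `χ = a b⁻¹ u`.
-/

section Group

variable {G : Type*} [Group G] [DecidableEq G]

theorem card_insert_mul_add_card_smul_inter (χ : G) (U A : Finset G) :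
    #(insert χ U * A) + #(χ • A ∩ (U * A)) = #A + #(U * A) := by
  rw [insert_eq, union_mul, singleton_mul, card_union_add_card_inter, card_smul_finset]

theorem exists_subset_card_le_two_mul_card_smul_inter {A : Finset G} (hA : A.Nonempty) :
    ∃ U ⊆ A, (#U + 1) * #A ≤ 2 * #(U * A) ∧ ∀ χ ∈ A, #A ≤ 2 * #(χ • A ∩ (U * A)) := by
  obtain ⟨a, ha⟩ := hA
  set C := A.powerset.filter fun U => (#U + 1) * #A ≤ 2 * #(U * A) with hC
  have h_singleton : {a} ∈ C := by
    simp [hC, ha, singleton_mul, card_smul_finset, two_mul]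
  obtain ⟨U, hUC, hU_max⟩ := C.exists_max_image card ⟨_, h_singleton⟩
  simp only [hC, mem_filter, mem_powerset] at hUC hU_max
  refine ⟨U, hUC.1, hUC.2, fun χ hχ => ?_⟩
  by_cases hχU : χ ∈ U
  · rw [inter_eq_left.2 (smul_finset_subset_mul hχU), card_smul_finset]
    omega
  have h_insert : 2 * #(insert χ U * A) < (#U + 2) * #A := by
    by_contra! h
    have := hU_max (insert χ U) ⟨insert_subset hχ hUC.1, by rwa [card_insert_of_notMem hχU]⟩
    rw [card_insert_of_notMem hχU] at this
    omega
  have := card_insert_mul_add_card_smul_inter χ U A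
  linarith [hUC.2]

theorem card_le_two_mul_sub_one_of_card_mul_le {A U : Finset G} {K : ℝ} (hA : A.Nonempty)
    (hUA : U ⊆ A) (hU : (#U + 1) * #A ≤ 2 * #(U * A)) (hAA : (#(A * A) : ℝ) ≤ K * #A) :
    (#U : ℝ) ≤ 2 * K - 1 := by
  have h : ((#U : ℝ) + 1) * #A ≤ 2 * K * #A :=
    calc ((#U : ℝ) + 1) * #A ≤ 2 * #(U * A) := by exact_mod_cast hU
      _ ≤ 2 * #(A * A) := by gcongr
      _ ≤ 2 * K * #A := by linarith
  have := le_of_mul_le_mul_right h (by exact_mod_cast hA.card_pos)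
  linarith

end Group

theorem card_smul_inter_mul_le_card_filter {G : Type*} [CommGroup G] [DecidableEq G]
    (χ : G) (A U : Finset G) :
    #(χ • A ∩ (U * A)) ≤ #((A ×ˢ A ×ˢ U).filter fun t => χ = t.1 * t.2.1⁻¹ * t.2.2) := by
  refine card_le_card_of_surjOn (fun t => χ * t.2.1) fun x hx => ?_
  simp only [coe_inter, Set.mem_inter_iff, mem_coe, mem_smul_finset, mem_mul] at hx
  obtain ⟨⟨b, hb, rfl⟩, u, hu, a, ha, hua⟩ := hx
  refine ⟨(a, b, u), mem_filter.2 ⟨mem_product.2 ⟨ha, mem_product.2 ⟨hb, hu⟩⟩, ?_⟩, rfl⟩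
  rw [mul_right_comm, mul_comm a, hua, smul_eq_mul, mul_inv_cancel_right]

theorem green_ruzsa_cover_characters_general
    (q : ℕ)
    (A : Finset (DirichletCharacter ℂ q)) (K : ℝ) (hK : 1 ≤ K)
    (hAA : ((A * A).card : ℝ) ≤ K * A.card) :
    ∃ U : Finset (DirichletCharacter ℂ q), (U.card : ℝ) ≤ 2 * K - 1 ∧
      ∀ χ ∈ A,
        ((A.card : ℝ) / 2) ≤
          ((A ×ˢ A ×ˢ U).filter
            (fun t => χ = t.1 * t.2.1⁻¹ * t.2.2)).card := by
  rcases A.eq_empty_or_nonempty with rfl | hA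
  · exact ⟨∅, by rw [card_empty, Nat.cast_zero]; linarith, by simp⟩
  obtain ⟨U, hUA, hU, h_cover⟩ := exists_subset_card_le_two_mul_card_smul_inter hA
  refine ⟨U, card_le_two_mul_sub_one_of_card_mul_le hA hUA hU hAA, fun χ hχ => ?_⟩
  have h_half : (#A : ℝ) ≤ 2 * #(χ • A ∩ (U * A)) := by exact_mod_cast h_cover χ hχ
  calc (#A : ℝ) / 2 ≤ #(χ • A ∩ (U * A)) := by linarith
    _ ≤ _ := by exact_mod_cast card_smul_inter_mul_le_card_filter χ A U

/-- Green–Ruzsa covering lemma for the group of Dirichlet characters mod `q`: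
if `#(A·A) ≤ K·#A` then there is a set `U` with `#U ≤ 2K - 1` such that every `χ ∈ A`
has at least `#A/2` representations `χ = χ₁ · χ₂⁻¹ · η` with `χ₁, χ₂ ∈ A`, `η ∈ U`. -/
theorem green_ruzsa_cover_characters
    (q : ℕ) (hq : q.Prime)
    (A : Finset (DirichletCharacter ℂ q)) (K : ℝ) (hK : 1 ≤ K)
    (hAA : ((A * A).card : ℝ) ≤ K * A.card) :
    ∃ U : Finset (DirichletCharacter ℂ q), (U.card : ℝ) ≤ 2 * K - 1 ∧
      ∀ χ ∈ A,
        ((A.card : ℝ) / 2) ≤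
          ((A ×ˢ A ×ˢ U).filter
            (fun t => χ = t.1 * t.2.1⁻¹ * t.2.2)).card :=
  green_ruzsa_cover_characters_general q A K hK hAA
end
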